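/- Let A _Q⊗_R B and A' _{Q'}⊗_{R'} B' be two L-R-twisted tensor products of algebras, and let f : A → A' and g : B → B' be algebra maps satisfying (f ⊗ g) ∘ R = R' ∘ (g ⊗ f) and (f ⊗ g) ∘ Q = Q' ∘ (f ⊗ g). Then f ⊗ g is an algebra map from A _Q⊗_R B to A' _{Q'}⊗_{R'} B'. -/
import Mathlib


open TensorProduct

noncomputable section

namespace LR

variable {k : Type*} [Field k]

section Toolbox

variable {X Y Z W X' Y' : Type*}
  [AddCommMonoid X] [Module k X] [AddCommMonoid Y] [Module k Y]
  [AddCommMonoid Z] [Module k Z] [AddCommMonoid W] [Module k W]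
  [AddCommMonoid X'] [Module k X'] [AddCommMonoid Y'] [Module k Y']

/-- Expand the first tensor factor using `f : X →ₗ X' ⊗ Y'`. -/
def expand (f : X →ₗ[k] X' ⊗[k] Y') : X ⊗[k] Z →ₗ[k] X' ⊗[k] (Y' ⊗[k] Z) :=
  (TensorProduct.assoc k X' Y' Z).toLinearMap ∘ₗ (TensorProduct.map f LinearMap.id)

/-- Apply `f` to the first two factors of a right-nested triple tensor. -/
def app2 (f : X ⊗[k] Y →ₗ[k] X' ⊗[k] Y') :
    X ⊗[k] (Y ⊗[k] Z) →ₗ[k] X' ⊗[k] (Y' ⊗[k] Z) :=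
  (TensorProduct.assoc k X' Y' Z).toLinearMap ∘ₗ (TensorProduct.map f LinearMap.id)
    ∘ₗ (TensorProduct.assoc k X Y Z).symm.toLinearMap

/-- Contract the first two factors of a right-nested triple tensor with `m`. -/
def con2 (m : X ⊗[k] Y →ₗ[k] W) : X ⊗[k] (Y ⊗[k] Z) →ₗ[k] W ⊗[k] Z :=
  (TensorProduct.map m LinearMap.id) ∘ₗ (TensorProduct.assoc k X Y Z).symm.toLinearMap

/-- Swap the first two factors of a right-nested triple tensor. -/
def swL : X ⊗[k] (Y ⊗[k] Z) →ₗ[k] Y ⊗[k] (X ⊗[k] Z) :=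
  (TensorProduct.assoc k Y X Z).toLinearMap
    ∘ₗ (TensorProduct.map (TensorProduct.comm k X Y).toLinearMap LinearMap.id)
    ∘ₗ (TensorProduct.assoc k X Y Z).symm.toLinearMap

/-- Exchange the second and third factors of `(X ⊗ Y) ⊗ Z`. -/
def ex23 : (X ⊗[k] Y) ⊗[k] Z →ₗ[k] (X ⊗[k] Z) ⊗[k] Y :=
  (TensorProduct.assoc k X Z Y).symm.toLinearMap
    ∘ₗ (TensorProduct.map LinearMap.id (TensorProduct.comm k Y Z).toLinearMap)
    ∘ₗ (TensorProduct.assoc k X Y Z).toLinearMap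

/-- The componentwise multiplication on a tensor product of two
(not necessarily unital) multiplications. -/
def tensMul (m₁ : X ⊗[k] X →ₗ[k] X) (m₂ : Y ⊗[k] Y →ₗ[k] Y) :
    (X ⊗[k] Y) ⊗[k] (X ⊗[k] Y) →ₗ[k] X ⊗[k] Y :=
  (TensorProduct.map m₁ m₂) ∘ₗ (tensorTensorTensorComm k X Y X Y).toLinearMap

end Toolbox

section LRPair

variable {A B : Type*} [AddCommMonoid A] [Module k A] [AddCommMonoid B] [Module k B]

/-- `x ⊗ y ↦ Σ x·a'_S ⊗ y_S` where `S(y ⊗ a') = a'_S ⊗ y_S`. -/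
def rext (mA : A ⊗[k] A →ₗ[k] A) (S : B ⊗[k] A →ₗ[k] A ⊗[k] B) (a' : A) :
    A ⊗[k] B →ₗ[k] A ⊗[k] B :=
  (TensorProduct.map mA LinearMap.id)
    ∘ₗ (TensorProduct.assoc k A A B).symm.toLinearMap
    ∘ₗ (TensorProduct.map LinearMap.id (S ∘ₗ (TensorProduct.mk k B A).flip a'))

/-- `x ⊗ y ↦ Σ x_S ⊗ b_S · y` where `S(b ⊗ x) = x_S ⊗ b_S`. -/
def lext (mB : B ⊗[k] B →ₗ[k] B) (S : B ⊗[k] A →ₗ[k] A ⊗[k] B) (b : B) :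
    A ⊗[k] B →ₗ[k] A ⊗[k] B :=
  (TensorProduct.map LinearMap.id mB)
    ∘ₗ (TensorProduct.assoc k A B B).toLinearMap
    ∘ₗ (TensorProduct.map (S ∘ₗ (TensorProduct.mk k B A) b) LinearMap.id)

/-- `x ⊗ y ↦ Σ a_S · x ⊗ y_S` where `S(a ⊗ y) = a_S ⊗ y_S`. -/
def qlext (mA : A ⊗[k] A →ₗ[k] A) (S : A ⊗[k] B →ₗ[k] A ⊗[k] B) (a : A) :
    A ⊗[k] B →ₗ[k] A ⊗[k] B :=
  (TensorProduct.map (mA ∘ₗ (TensorProduct.comm k A A).toLinearMap) LinearMap.id)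
    ∘ₗ (TensorProduct.assoc k A A B).symm.toLinearMap
    ∘ₗ (TensorProduct.map LinearMap.id (S ∘ₗ (TensorProduct.mk k A B) a))

/-- `x ⊗ y ↦ Σ x_S ⊗ y · b'_S` where `S(x ⊗ b') = x_S ⊗ b'_S`. -/
def qrext (mB : B ⊗[k] B →ₗ[k] B) (S : A ⊗[k] B →ₗ[k] A ⊗[k] B) (b' : B) :
    A ⊗[k] B →ₗ[k] A ⊗[k] B :=
  (TensorProduct.map LinearMap.id (mB ∘ₗ (TensorProduct.comm k B B).toLinearMap))
    ∘ₗ (TensorProduct.assoc k A B B).toLinearMap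
    ∘ₗ (TensorProduct.map (S ∘ₗ (TensorProduct.mk k A B).flip b') LinearMap.id)

/-- `x ⊗ y ↦ Σ y ⊗ S(x ⊗ b')`. -/
def swQ (S : A ⊗[k] B →ₗ[k] A ⊗[k] B) (b' : B) :
    A ⊗[k] B →ₗ[k] B ⊗[k] (A ⊗[k] B) :=
  (TensorProduct.map LinearMap.id S)
    ∘ₗ (TensorProduct.map LinearMap.id ((TensorProduct.mk k A B).flip b'))
    ∘ₗ (TensorProduct.comm k A B).toLinearMap

/-- `x ⊗ y ↦ Σ v ⊗ (u ⊗ y)` where `S(b ⊗ x) = u ⊗ v`. -/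
def swR (S : B ⊗[k] A →ₗ[k] A ⊗[k] B) (b : B) :
    A ⊗[k] B →ₗ[k] B ⊗[k] (A ⊗[k] B) :=
  (TensorProduct.assoc k B A B).toLinearMap
    ∘ₗ (TensorProduct.map (TensorProduct.comm k A B).toLinearMap LinearMap.id)
    ∘ₗ (TensorProduct.map (S ∘ₗ (TensorProduct.mk k B A) b) LinearMap.id)

/-- `x ⊗ y ↦ Σ x ⊗ (v ⊗ u)` where `S(a' ⊗ y) = u ⊗ v`. -/
def swQ2 (S : A ⊗[k] B →ₗ[k] A ⊗[k] B) (a' : A) :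
    A ⊗[k] B →ₗ[k] A ⊗[k] (B ⊗[k] A) :=
  TensorProduct.map LinearMap.id
    ((TensorProduct.comm k A B).toLinearMap ∘ₗ S ∘ₗ (TensorProduct.mk k A B) a')

/-- `x ⊗ y ↦ Σ u ⊗ (v ⊗ x)` where `S(y ⊗ a) = u ⊗ v`. -/
def swR2 (S : B ⊗[k] A →ₗ[k] A ⊗[k] B) (a : A) :
    A ⊗[k] B →ₗ[k] A ⊗[k] (B ⊗[k] A) :=
  (TensorProduct.assoc k A B A).toLinearMap
    ∘ₗ (TensorProduct.map (S ∘ₗ (TensorProduct.mk k B A).flip a) LinearMap.id)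
    ∘ₗ (TensorProduct.comm k A B).toLinearMap

/-- `(a ⊗ b) ⊗ (a' ⊗ b') ↦ (a ⊗ b') ⊗ (b ⊗ a')`. -/
def lrRearr : (A ⊗[k] B) ⊗[k] (A ⊗[k] B) →ₗ[k] (A ⊗[k] B) ⊗[k] (B ⊗[k] A) :=
  (tensorTensorTensorComm k A B B A).toLinearMap
    ∘ₗ (TensorProduct.map LinearMap.id (TensorProduct.comm k A B).toLinearMap)

/-- The multiplication of the L-R-twisted tensor product:
`(a ⊗ b)(a' ⊗ b') = a_Q a'_R ⊗ b_R b'_Q`. -/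
def lrMulGen (mA : A ⊗[k] A →ₗ[k] A) (mB : B ⊗[k] B →ₗ[k] B)
    (Q : A ⊗[k] B →ₗ[k] A ⊗[k] B) (R : B ⊗[k] A →ₗ[k] A ⊗[k] B) :
    (A ⊗[k] B) ⊗[k] (A ⊗[k] B) →ₗ[k] A ⊗[k] B :=
  (TensorProduct.map mA (mB ∘ₗ (TensorProduct.comm k B B).toLinearMap))
    ∘ₗ (tensorTensorTensorComm k A B A B).toLinearMap
    ∘ₗ (TensorProduct.map Q R) ∘ₗ lrRearr

/-- `R : B ⊗ A → A ⊗ B` is a twisting map (w.r.t. the given multiplications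
and units). -/
def IsTwistingMap (mA : A ⊗[k] A →ₗ[k] A) (mB : B ⊗[k] B →ₗ[k] B)
    (oneA : A) (oneB : B) (R : B ⊗[k] A →ₗ[k] A ⊗[k] B) : Prop :=
  (∀ a : A, R (oneB ⊗ₜ a) = a ⊗ₜ oneB) ∧
  (∀ b : B, R (b ⊗ₜ oneA) = oneA ⊗ₜ b) ∧
  (∀ (a a' : A) (b : B), R (b ⊗ₜ mA (a ⊗ₜ a')) = rext mA R a' (R (b ⊗ₜ a))) ∧
  (∀ (a : A) (b b' : B), R (mB (b ⊗ₜ b') ⊗ₜ a) = lext mB R b (R (b' ⊗ₜ a)))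

/-- The axioms of an L-R-twisted tensor product `A _Q⊗_R B`. -/
def IsLRPair (mA : A ⊗[k] A →ₗ[k] A) (mB : B ⊗[k] B →ₗ[k] B)
    (oneA : A) (oneB : B)
    (Q : A ⊗[k] B →ₗ[k] A ⊗[k] B) (R : B ⊗[k] A →ₗ[k] A ⊗[k] B) : Prop :=
  IsTwistingMap mA mB oneA oneB R ∧
  (∀ a : A, Q (a ⊗ₜ oneB) = a ⊗ₜ oneB) ∧
  (∀ b : B, Q (oneA ⊗ₜ b) = oneA ⊗ₜ b) ∧
  (∀ (a a' : A) (b : B), Q (mA (a ⊗ₜ a') ⊗ₜ b) = qlext mA Q a (Q (a' ⊗ₜ b))) ∧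
  (∀ (a : A) (b b' : B), Q (a ⊗ₜ mB (b ⊗ₜ b')) = qrext mB Q b' (Q (a ⊗ₜ b))) ∧
  (∀ (a : A) (b b' : B), swQ Q b' (R (b ⊗ₜ a)) = swR R b (Q (a ⊗ₜ b'))) ∧
  (∀ (a a' : A) (b : B), swQ2 Q a' (R (b ⊗ₜ a)) = swR2 R a (Q (a' ⊗ₜ b)))

end LRPair

end LR

namespace LR

/-- If `f : A → A'` and `g : B → B'` are algebra maps intertwining the
structure maps of two L-R-twisted tensor products, then `f ⊗ g` is an algebra map
`A _Q⊗_R B → A' _{Q'}⊗_{R'} B'`. -/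
theorem lr_twisted_tensor_product_map
    {k : Type*} [Field k] {A B A' B' : Type*}
    [Ring A] [Algebra k A] [Ring B] [Algebra k B]
    [Ring A'] [Algebra k A'] [Ring B'] [Algebra k B']
    (Q : A ⊗[k] B →ₗ[k] A ⊗[k] B) (R : B ⊗[k] A →ₗ[k] A ⊗[k] B)
    (Q' : A' ⊗[k] B' →ₗ[k] A' ⊗[k] B') (R' : B' ⊗[k] A' →ₗ[k] A' ⊗[k] B')
    (h : IsLRPair (LinearMap.mul' k A) (LinearMap.mul' k B) (1 : A) (1 : B) Q R)
    (h' : IsLRPair (LinearMap.mul' k A') (LinearMap.mul' k B') (1 : A') (1 : B') Q' R')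
    (f : A →ₐ[k] A') (g : B →ₐ[k] B')
    (hR : TensorProduct.map f.toLinearMap g.toLinearMap ∘ₗ R =
      R' ∘ₗ TensorProduct.map g.toLinearMap f.toLinearMap)
    (hQ : TensorProduct.map f.toLinearMap g.toLinearMap ∘ₗ Q =
      Q' ∘ₗ TensorProduct.map f.toLinearMap g.toLinearMap) :
    TensorProduct.map f.toLinearMap g.toLinearMap ((1 : A) ⊗ₜ[k] (1 : B)) =
      (1 : A') ⊗ₜ[k] (1 : B') ∧
    ∀ x y : A ⊗[k] B,
      TensorProduct.map f.toLinearMap g.toLinearMap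
          (lrMulGen (LinearMap.mul' k A) (LinearMap.mul' k B) Q R (x ⊗ₜ[k] y)) =
        lrMulGen (LinearMap.mul' k A') (LinearMap.mul' k B') Q' R'
          ((TensorProduct.map f.toLinearMap g.toLinearMap x) ⊗ₜ[k]
            (TensorProduct.map f.toLinearMap g.toLinearMap y)) := by
  set FG := TensorProduct.map f.toLinearMap g.toLinearMap with hFG
  set GF := TensorProduct.map g.toLinearMap f.toLinearMap with hGF
  -- post-multiplication parts
  set P : (A ⊗[k] B) ⊗[k] (A ⊗[k] B) →ₗ[k] A ⊗[k] B :=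
    (TensorProduct.map (LinearMap.mul' k A)
        ((LinearMap.mul' k B) ∘ₗ (TensorProduct.comm k B B).toLinearMap))
      ∘ₗ (tensorTensorTensorComm k A B A B).toLinearMap with hP
  set P' : (A' ⊗[k] B') ⊗[k] (A' ⊗[k] B') →ₗ[k] A' ⊗[k] B' :=
    (TensorProduct.map (LinearMap.mul' k A')
        ((LinearMap.mul' k B') ∘ₗ (TensorProduct.comm k B' B').toLinearMap))
      ∘ₗ (tensorTensorTensorComm k A' B' A' B').toLinearMap with hP'
  have L1 : FG ∘ₗ P = P' ∘ₗ TensorProduct.map FG FG := by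
    apply TensorProduct.ext_fourfold'
    intro a b a' b'
    simp [hP, hP', hFG, tensorTensorTensorComm, tensorTensorTensorAssoc,
      LinearMap.mul'_apply]
  have L2 : TensorProduct.map FG GF ∘ₗ (lrRearr : (A ⊗[k] B) ⊗[k] (A ⊗[k] B) →ₗ[k] _)
      = lrRearr ∘ₗ TensorProduct.map FG FG := by
    apply TensorProduct.ext_fourfold'
    intro a b a' b'
    simp [lrRearr, hFG, hGF, tensorTensorTensorComm, tensorTensorTensorAssoc]
  have L3 : TensorProduct.map FG FG ∘ₗ TensorProduct.map Q R =
      TensorProduct.map Q' R' ∘ₗ TensorProduct.map FG GF := by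
    rw [← TensorProduct.map_comp, ← TensorProduct.map_comp, hQ, hR]
  have key : ∀ z : (A ⊗[k] B) ⊗[k] (A ⊗[k] B),
      FG (lrMulGen (LinearMap.mul' k A) (LinearMap.mul' k B) Q R z) =
      lrMulGen (LinearMap.mul' k A') (LinearMap.mul' k B') Q' R'
        (TensorProduct.map FG FG z) := by
    have hmul : lrMulGen (LinearMap.mul' k A) (LinearMap.mul' k B) Q R =
        P ∘ₗ TensorProduct.map Q R ∘ₗ lrRearr := rfl
    have hmul' : lrMulGen (LinearMap.mul' k A') (LinearMap.mul' k B') Q' R' =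
        P' ∘ₗ TensorProduct.map Q' R' ∘ₗ lrRearr := rfl
    simp only [LinearMap.ext_iff, LinearMap.comp_apply] at L1 L2 L3
    intro z
    rw [hmul, hmul']
    simp only [LinearMap.comp_apply]
    rw [L1, L3, L2]
  refine ⟨by simp [hFG], fun x y => ?_⟩
  have := key (x ⊗ₜ[k] y)
  simpa using this

end LR
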